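/- arXiv:2208.06086 — 3 statements merged into one kernel-verified Lean document; each statement's English description precedes it below -/
import Mathlib

section
/- Let m = 2^k with k ≥ 4. Then the odd part of (2m)!, namely (2m)!/2^{2m−1}, is congruent to 11 modulo 64. -/
/-!
Splitting `(2n)!` into its even and odd factors gives `(2n)! = 2^n n! (2n-1)‼`, so by induction
`(2^j)! = 2^(2^j-1) ∏_{i<j} (2^(i+1)-1)‼` and the odd part of `(2^j)!` is that product.
The odd numbers below `64s` run `s` times through the units of `ℤ/64`, whose product is `1`
(there are three elements of order two), so only the factors with `i < 5` matter modulo `64`.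
-/

open Finset Nat

namespace Nat

theorem doubleFactorial_add_two_mul (n t : ℕ) :
    (n + 2 * t)‼ = (∏ i ∈ range t, (n + 2 * i + 2)) * n‼ := by
  induction t with
  | zero => simp
  | succ t ih =>
    rw [show n + 2 * (t + 1) = n + 2 * t + 2 by ring, doubleFactorial_add_two, ih,
      prod_range_succ]
    ring

theorem factorial_two_mul_eq (n : ℕ) : (2 * n)! = 2 ^ n * n ! * (2 * n - 1)‼ := by
  rcases n.eq_zero_or_pos with rfl | hn
  · rfl
  · have h : 2 * n = 2 * n - 1 + 1 := by omega
    rw [h, factorial_eq_mul_doubleFactorial, ← h, doubleFactorial_two_mul]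

theorem factorial_two_pow_eq (j : ℕ) :
    (2 ^ j)! = 2 ^ (2 ^ j - 1) * ∏ i ∈ range j, (2 ^ (i + 1) - 1)‼ := by
  induction j with
  | zero => simp
  | succ j ih =>
    have hexp : 2 ^ j + (2 ^ j - 1) = 2 ^ (j + 1) - 1 := by
      have := j.one_le_two_pow; rw [pow_succ]; omega
    rw [pow_succ, mul_comm _ 2, factorial_two_mul_eq, ih, ← pow_succ', prod_range_succ,
      ← hexp, pow_add]
    ring

end Nat

set_option maxRecDepth 10000 in
theorem ZMod.prod_range_32_odd_eq_one (x : ZMod 64) :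
    ∏ i ∈ range 32, (2 * x + 2 * i + 3) = 1 := by
  revert x
  decide

theorem cast_doubleFactorial_add_64 {n : ℕ} (hn : Odd n) :
    ((n + 64)‼ : ZMod 64) = n‼ := by
  obtain ⟨a, rfl⟩ := hn
  rw [show 2 * a + 1 + 64 = 2 * a + 1 + 2 * 32 by rfl, doubleFactorial_add_two_mul,
    Nat.cast_mul, Nat.cast_prod]
  convert one_mul _ using 2
  rw [← ZMod.prod_range_32_odd_eq_one (a : ZMod 64)]
  refine prod_congr rfl fun i _ => ?_
  push_cast
  ring

theorem cast_doubleFactorial_64_mul_add_63 (s : ℕ) : ((64 * s + 63)‼ : ZMod 64) = 1 := by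
  induction s with
  | zero => decide
  | succ s ih =>
    rw [show 64 * (s + 1) + 63 = 64 * s + 63 + 64 by ring,
      cast_doubleFactorial_add_64 ⟨32 * s + 31, by ring⟩, ih]

theorem cast_doubleFactorial_two_pow_sub_one {j : ℕ} (hj : 6 ≤ j) :
    ((2 ^ j - 1)‼ : ZMod 64) = 1 := by
  obtain ⟨i, rfl⟩ := Nat.exists_eq_add_of_le hj
  have := i.one_le_two_pow
  rw [show 2 ^ (6 + i) - 1 = 64 * (2 ^ i - 1) + 63 by rw [pow_add]; omega]
  exact cast_doubleFactorial_64_mul_add_63 _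

theorem cast_prod_doubleFactorial_two_pow_sub_one {j : ℕ} (hj : 5 ≤ j) :
    ((∏ i ∈ range j, (2 ^ (i + 1) - 1)‼ : ℕ) : ZMod 64) = 11 := by
  have htail : ∏ i ∈ Ico 5 j, ((2 ^ (i + 1) - 1)‼ : ZMod 64) = 1 :=
    prod_eq_one fun i hi => cast_doubleFactorial_two_pow_sub_one (by rw [mem_Ico] at hi; omega)
  rw [← prod_range_mul_prod_Ico _ hj, Nat.cast_mul, Nat.cast_prod (s := Ico 5 j), htail, mul_one]
  decide

/-- For `m = 2^k` with `k ≥ 4`, the odd part `(2m)! / 2^(2m-1)` is `≡ 11 (mod 64)`. -/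
theorem odd_part_factorial_mod_64 (k m : ℕ) (hk : 4 ≤ k) (hm : m = 2 ^ k) :
    Nat.factorial (2 * m) / 2 ^ (2 * m - 1) % 64 = 11 := by
  have h2m : 2 * m = 2 ^ (k + 1) := by rw [hm, pow_succ, mul_comm]
  rw [h2m, factorial_two_pow_eq, Nat.mul_div_cancel_left _ (by positivity), ← ZMod.val_natCast,
    cast_prod_doubleFactorial_two_pow_sub_one (by omega)]
  rfl
end

section
/- Let m = 2^k with k ≥ 4. Then the central binomial coefficient C(2m, m) is congruent to 6 modulo 8. -/
/-!
Write `m = 2n`. Vandermonde gives `C(2m, m) = ∑ᵢ C(m, i)²`, and the symmetry `C(m, i) = C(m, m - i)`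
turns this into `C(m, n)² + 2 (1 + ∑_{0 < i < n} C(m, i)²)`. When `m` is a power of two every
`C(m, i)` with `0 < i < m` is even, so the last sum is divisible by `4` and
`C(2m, m) ≡ C(m, n)² + 2 (mod 8)`. Since `6² + 2 ≡ 6 (mod 8)`, induction from `C(4, 2) = 6` gives
`C(2^(k+1), 2^k) ≡ 6 (mod 8)` for all `k ≥ 1`.
-/
open Finset

theorem Finset.sum_range_two_mul_add_one_of_symm {M : Type*} [AddCommMonoid M] (f : ℕ → M)
    (n : ℕ) (hf : ∀ i < n, f (2 * n - i) = f i) :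
    ∑ i ∈ range (2 * n + 1), f i = f n + 2 • ∑ i ∈ range n, f i := by
  have upper : ∑ j ∈ range n, f (n + (j + 1)) = ∑ i ∈ range n, f i := by
    rw [← sum_range_reflect f n]
    refine sum_congr rfl fun j hj => ?_
    have hj : j < n := mem_range.mp hj
    rw [← hf (n - 1 - j) (by omega)]
    congr 1
    omega
  rw [show 2 * n + 1 = n + (n + 1) by ring, sum_range_add, sum_range_succ', add_zero, upper,
    two_nsmul]
  abel

theorem Nat.choose_two_mul_two_mul_modEq_sq_add_two (n : ℕ) (hn : 0 < n)
    (heven : ∀ i, 0 < i → i < n → 2 ∣ (2 * n).choose i) :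
    (2 * (2 * n)).choose (2 * n) ≡ (2 * n).choose n ^ 2 + 2 [MOD 8] := by
  obtain ⟨t, ht⟩ : 4 ∣ ∑ i ∈ Ico 1 n, (2 * n).choose i ^ 2 :=
    dvd_sum fun i hi => by
      obtain ⟨hi1, hin⟩ := mem_Ico.mp hi
      simpa using pow_dvd_pow_of_dvd (heven i hi1 hin) 2
  rw [← Nat.sum_range_choose_sq, sum_range_two_mul_add_one_of_symm _ _ fun i hi => by
      rw [Nat.choose_symm (by omega)],
    range_eq_Ico, sum_eq_sum_Ico_succ_bot hn, ht, Nat.choose_zero_right, smul_eq_mul]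
  unfold Nat.ModEq
  omega

theorem Nat.choose_two_pow_succ_two_pow_modEq (k : ℕ) (hk : 1 ≤ k) :
    (2 ^ (k + 1)).choose (2 ^ k) ≡ 6 [MOD 8] := by
  induction k, hk using Nat.le_induction with
  | base => decide
  | succ k _ ih =>
    have hpow : 2 ^ (k + 1) = 2 * 2 ^ k := by ring
    have key := Nat.choose_two_mul_two_mul_modEq_sq_add_two (2 ^ k) (by positivity) fun i hi hik =>
      hpow ▸ Nat.prime_two.dvd_choose_pow hi.ne' (by omega)
    rw [← hpow, ← pow_succ'] at key
    exact key.trans ((ih.pow 2).add_right 2)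

/-- For `m = 2^k` with `k ≥ 4`, the central binomial coefficient `C(2m, m) ≡ 6 (mod 8)`. -/
theorem central_binom_mod_eight (k m : ℕ) (hk : 4 ≤ k) (hm : m = 2 ^ k) :
    Nat.choose (2 * m) m % 8 = 6 := by
  subst hm
  rw [← pow_succ']
  exact Nat.choose_two_pow_succ_two_pow_modEq k (by omega)
end

section
/- Let k ≥ 4 and let D be the product of all odd primes p such that p − 1 divides 2^{k+1}. Then D ≡ −1 modulo 64. -/
/-!
An odd prime `p` with `p - 1 ∣ 2 ^ (k + 1)` is a Fermat prime `2 ^ m + 1` with `1 ≤ m ≤ k + 1`.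
For `m ≥ 6` it is `≡ 1 (mod 64)`, while for `m ≤ 5` only `3`, `5` and `17` are prime; these three
occur as soon as `k ≥ 3`, and `3 * 5 * 17 = 255 ≡ -1 (mod 64)`.
-/

open Finset

theorem Nat.prod_modEq_prod_of_subset {α : Type*} {n : ℕ} {f : α → ℕ} {s t : Finset α}
    (hst : s ⊆ t) (hf : ∀ x ∈ t, x ∉ s → f x ≡ 1 [MOD n]) :
    ∏ x ∈ t, f x ≡ ∏ x ∈ s, f x [MOD n] := by
  simp only [← ZMod.natCast_eq_natCast_iff, Nat.cast_one, Nat.cast_prod] at *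
  exact (prod_subset hst hf).symm

theorem Nat.two_pow_add_one_modEq_one {m n : ℕ} (h : n ≤ m) : 2 ^ m + 1 ≡ 1 [MOD 2 ^ n] :=
  calc 2 ^ m + 1 ≡ 0 + 1 [MOD 2 ^ n] :=
        ((Nat.modEq_zero_iff_dvd).2 (pow_dvd_pow 2 h)).add_right 1
    _ = 1 := zero_add 1

theorem Nat.exists_eq_two_pow_add_one_of_sub_one_dvd_two_pow {p j : ℕ} (hp : 0 < p)
    (h : p - 1 ∣ 2 ^ j) : ∃ m ≤ j, p = 2 ^ m + 1 := by
  obtain ⟨m, hmj, hm⟩ := (Nat.dvd_prime_pow Nat.prime_two).1 h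
  exact ⟨m, hmj, by omega⟩

theorem Nat.two_pow_add_one_mem_of_prime_of_lt_six {m : ℕ} (hm0 : 0 < m) (hm6 : m < 6)
    (hp : (2 ^ m + 1).Prime) : 2 ^ m + 1 ∈ ({3, 5, 17} : Finset ℕ) := by
  interval_cases m <;> revert hp <;> norm_num

theorem Nat.modEq_one_of_sub_one_dvd_two_pow {p j : ℕ} (hp : p.Prime) (hodd : Odd p)
    (h : p - 1 ∣ 2 ^ j) (hsmall : p ∉ ({3, 5, 17} : Finset ℕ)) : p ≡ 1 [MOD 64] := by
  obtain ⟨m, -, rfl⟩ := exists_eq_two_pow_add_one_of_sub_one_dvd_two_pow hp.pos h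
  have hm0 : 0 < m := Nat.pos_of_ne_zero (by rintro rfl; exact absurd hodd (by decide))
  by_cases hm6 : m < 6
  · exact absurd (two_pow_add_one_mem_of_prime_of_lt_six hm0 hm6 hp) hsmall
  · exact two_pow_add_one_modEq_one (n := 6) (by omega)

theorem Nat.two_pow_add_one_mem_filter {j m : ℕ} (hm0 : 0 < m) (hmj : m ≤ j)
    (hp : (2 ^ m + 1).Prime) :
    2 ^ m + 1 ∈ (range (2 ^ j + 2)).filter (fun p => p.Prime ∧ Odd p ∧ p - 1 ∣ 2 ^ j) := by
  have hle : 2 ^ m ≤ 2 ^ j := Nat.pow_le_pow_right two_pos hmj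
  refine mem_filter.2 ⟨mem_range.2 (by omega), hp, ?_, ?_⟩
  · exact (Nat.even_pow.2 ⟨even_two, hm0.ne'⟩).add_one
  · simpa using pow_dvd_pow 2 hmj

/-- For `k ≥ 4`, the product of all odd primes `p` with `p - 1 ∣ 2^(k+1)`
is `≡ -1 (mod 64)`. -/
theorem clausen_staudt_denominator_mod_64 (k : ℕ) (hk : 4 ≤ k) :
    (∏ p ∈ (Finset.range (2 ^ (k + 1) + 2)).filter
        (fun p => p.Prime ∧ Odd p ∧ p - 1 ∣ 2 ^ (k + 1)), p) % 64 = 63 := by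
  set S := (range (2 ^ (k + 1) + 2)).filter (fun p => p.Prime ∧ Odd p ∧ p - 1 ∣ 2 ^ (k + 1))
  have hsmall : ({3, 5, 17} : Finset ℕ) ⊆ S := by
    intro p hp
    simp only [mem_insert, mem_singleton] at hp
    rcases hp with rfl | rfl | rfl
    · exact Nat.two_pow_add_one_mem_filter (m := 1) one_pos (by omega) Nat.prime_three
    · exact Nat.two_pow_add_one_mem_filter (m := 2) two_pos (by omega) Nat.prime_five
    · exact Nat.two_pow_add_one_mem_filter (m := 4) four_pos (by omega) (by norm_num)
  have hlarge : ∀ p ∈ S, p ∉ ({3, 5, 17} : Finset ℕ) → p ≡ 1 [MOD 64] := fun p hp =>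
    have ⟨_, hprime, hodd, hdvd⟩ := mem_filter.1 hp
    Nat.modEq_one_of_sub_one_dvd_two_pow hprime hodd hdvd
  have h255 : ∏ p ∈ ({3, 5, 17} : Finset ℕ), p ≡ 63 [MOD 64] := by decide
  exact (Nat.prod_modEq_prod_of_subset hsmall hlarge).trans h255
end
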